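/- arXiv:1506.02385 — 6 statements merged into one kernel-verified Lean document; each statement's English description precedes it below -/
import Mathlib

section
/- Let m be a nonnegative Borel measure on (0,∞) with ∫_{(0,∞)} y dm(y) < ∞. Define M₀ ≡ 1 and, for k ≥ 1, M_k(x) = 2k ∫_{(0,∞)} min(x,y) M_{k−1}(y) dm(y). Then every M_k is bounded on (0,∞). Moreover, if there exist C > 0 and an irrational ρ > 0 such that I(x) := ∫_{(0,x)} y dm(y) ≤ C x^ρ for all x ∈ (0,1), then for every k ≥ 0 there exists C_k > 0 such that M_k(x) ≤ C_k x^{min(kρ,1)} for all x ∈ (0,1). Consequently, for any ρ > 0 (not necessarily irrational) with I(x) ≤ C x^ρ on (0,1), there exist an integer k ≥ 1 and C' > 0 such that M_k(x) ≤ C' x for all x ∈ (0,1). -/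
/-!
Bounding `min(x, y)` by `y` gives `M_{k+1} ≤ 2(k+1) (∫ y dm) sup M_k`, hence boundedness.

For the power bounds, first upgrade `I(x) ≤ C x^ρ` to `∫_{(0,t]} y dm ≤ D t^ρ` for all `t > 0`.
If `M_k(y) ≤ c y^α` on `(0,1)`, split `∫_{(0,1)} min(x,y) y^α dm` at `y = x`: the part below `x`
is at most `x^α I(x) ≲ x^{α+ρ}`, the part above is `x ∫_{(x,1)} y^{α-1} y dm`. Each dyadic piece
`(t, 2t]` contributes `≲ t^{α-1+ρ}` to the latter integral, and summing the pieces between `x` and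
`1` gives a geometric sum, of size `≲ x^{α+ρ-1}` if `α + ρ < 1` and `≲ 1` if `α + ρ > 1`. The
critical case `α + ρ = 1` never occurs along `α = min(kρ, 1)` because `(k+1)ρ` is irrational.
For rational `ρ`, decrease `ρ` to an irrational `ρ'` and take `k ≥ 1/ρ'`.
-/

open MeasureTheory Set
open scoped ENNReal

/-- The iterated moment functions `M_k` associated to a measure `m` on `(0,∞)`:
`M₀ ≡ 1` and `M_{k+1}(x) = 2(k+1) ∫_{(0,∞)} min(x,y) M_k(y) dm(y)`. -/
noncomputable def absMoment (m : Measure ℝ) : ℕ → ℝ → ℝ≥0∞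
  | 0, _ => 1
  | (k + 1), x =>
      ((2 * (k + 1) : ℕ) : ℝ≥0∞) *
        ∫⁻ y in Ioi (0 : ℝ), ENNReal.ofReal (min x y) * absMoment m k y ∂m

open ENNReal (ofReal)

variable {m : Measure ℝ} {ρ D : ℝ}

theorem absMoment_succ (k : ℕ) (x : ℝ) :
    absMoment m (k + 1) x = ((2 * (k + 1) : ℕ) : ℝ≥0∞) *
      ∫⁻ y in Ioi (0 : ℝ), ofReal (min x y) * absMoment m k y ∂m := rfl

theorem exists_absMoment_le (hm : ∫⁻ y in Ioi (0 : ℝ), ofReal y ∂m < ⊤) (k : ℕ) :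
    ∃ B : ℝ≥0∞, B ≠ ⊤ ∧ ∀ x, absMoment m k x ≤ B := by
  induction k with
  | zero => exact ⟨1, ENNReal.one_ne_top, fun _ => le_rfl⟩
  | succ k ih =>
    obtain ⟨B, hB, hMB⟩ := ih
    refine ⟨(2 * (k + 1) : ℕ) * ((∫⁻ y in Ioi (0 : ℝ), ofReal y ∂m) * B),
      by finiteness, fun x => ?_⟩
    rw [absMoment_succ, ← lintegral_mul_const' _ _ hB]
    gcongr with y
    · exact min_le_right x y
    · exact hMB y

theorem exists_lintegral_Ioc_le_rpow (hm : ∫⁻ y in Ioi (0 : ℝ), ofReal y ∂m < ⊤) {C : ℝ}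
    (hρ : 0 ≤ ρ)
    (hI : ∀ x ∈ Ioo (0 : ℝ) 1, ∫⁻ z in Ioo (0 : ℝ) x, ofReal z ∂m ≤ ofReal (C * x ^ ρ)) :
    ∃ D : ℝ, 0 ≤ D ∧ ∀ t > 0, ∫⁻ y in Ioc (0 : ℝ) t, ofReal y ∂m ≤ ofReal (D * t ^ ρ) := by
  set J := ∫⁻ y in Ioi (0 : ℝ), ofReal y ∂m
  have hJ : 0 ≤ J.toReal := ENNReal.toReal_nonneg
  refine ⟨max C J.toReal * 2 ^ ρ, by positivity, fun t ht => ?_⟩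
  have h2t : (2 * t) ^ ρ = 2 ^ ρ * t ^ ρ := Real.mul_rpow zero_le_two ht.le
  rcases lt_or_ge t (1 / 2) with ht2 | ht2
  · calc _ ≤ ∫⁻ z in Ioo (0 : ℝ) (2 * t), ofReal z ∂m :=
          lintegral_mono_set (Ioc_subset_Ioo_right (by linarith))
      _ ≤ ofReal (C * (2 * t) ^ ρ) := hI _ ⟨by linarith, by linarith⟩
      _ ≤ _ := by
          rw [h2t, ← mul_assoc]
          gcongr
          exact le_max_left _ _
  · have h1 : 1 ≤ (2 * t) ^ ρ := Real.one_le_rpow (by linarith) hρ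
    calc _ ≤ J := lintegral_mono_set Ioc_subset_Ioi_self
      _ = ofReal J.toReal := (ENNReal.ofReal_toReal hm.ne).symm
      _ ≤ ofReal (max C J.toReal * (2 * t) ^ ρ) :=
          ENNReal.ofReal_le_ofReal (by nlinarith [le_max_right C J.toReal])
      _ = _ := by rw [h2t, mul_assoc]

theorem lintegral_Ioc_two_mul_le {β x : ℝ} (hβ : β ≤ 0)
    (hD : ∀ t > 0, ∫⁻ y in Ioc (0 : ℝ) t, ofReal y ∂m ≤ ofReal (D * t ^ ρ)) (hx : 0 < x) :
    ∫⁻ y in Ioc x (2 * x), ofReal (y ^ β) * ofReal y ∂m ≤ ofReal (D * 2 ^ ρ * x ^ (β + ρ)) := by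
  calc _ ≤ ∫⁻ y in Ioc x (2 * x), ofReal (x ^ β) * ofReal y ∂m := by
        refine setLIntegral_mono' measurableSet_Ioc fun y hy => ?_
        gcongr ofReal ?_ * _
        exact Real.rpow_le_rpow_of_nonpos hx hy.1.le hβ
    _ = ofReal (x ^ β) * ∫⁻ y in Ioc x (2 * x), ofReal y ∂m :=
        lintegral_const_mul' _ _ ENNReal.ofReal_ne_top
    _ ≤ ofReal (x ^ β) * ofReal (D * (2 * x) ^ ρ) := by
        gcongr
        exact (lintegral_mono_set (Ioc_subset_Ioc_left hx.le)).trans (hD _ (by positivity))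
    _ = _ := by
        rw [← ENNReal.ofReal_mul (by positivity), Real.mul_rpow zero_le_two hx.le,
          Real.rpow_add hx]
        ring_nf

theorem lintegral_Ioo_le_geom_sum {β : ℝ} (hβ : β ≤ 0) (hD0 : 0 ≤ D)
    (hD : ∀ t > 0, ∫⁻ y in Ioc (0 : ℝ) t, ofReal y ∂m ≤ ofReal (D * t ^ ρ)) {n : ℕ} {x : ℝ}
    (hx : 0 < x) (hnx : 1 ≤ 2 ^ n * x) :
    ∫⁻ y in Ioo x 1, ofReal (y ^ β) * ofReal y ∂m ≤
      ofReal (D * 2 ^ ρ * x ^ (β + ρ) * ∑ j ∈ Finset.range n, ((2 : ℝ) ^ (β + ρ)) ^ j) := by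
  induction n generalizing x with
  | zero =>
    rw [pow_zero, one_mul] at hnx
    simp [Ioo_eq_empty (not_lt.2 hnx)]
  | succ n ih =>
    have h2x := ih (x := 2 * x) (by positivity) (by rwa [← mul_assoc, ← pow_succ])
    calc _ ≤ ∫⁻ y in Ioc x (2 * x) ∪ Ioo (2 * x) 1, ofReal (y ^ β) * ofReal y ∂m :=
          lintegral_mono_set Ioo_subset_Ioc_union_Ioo
      _ ≤ _ := (lintegral_union_le _ _ _).trans (add_le_add (lintegral_Ioc_two_mul_le hβ hD hx) h2x)
      _ = _ := by
          rw [← ENNReal.ofReal_add (by positivity) (by positivity), Real.mul_rpow zero_le_two hx.le,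
            geom_sum_succ]
          ring_nf

theorem exists_lintegral_Ioo_le_rpow_of_neg {β : ℝ} (hβ : β ≤ 0) (hs : β + ρ < 0) (hD0 : 0 ≤ D)
    (hD : ∀ t > 0, ∫⁻ y in Ioc (0 : ℝ) t, ofReal y ∂m ≤ ofReal (D * t ^ ρ)) :
    ∃ K : ℝ, 0 ≤ K ∧ ∀ x > 0,
      ∫⁻ y in Ioo x 1, ofReal (y ^ β) * ofReal y ∂m ≤ ofReal (K * x ^ (β + ρ)) := by
  set r : ℝ := 2 ^ (β + ρ)
  have hr0 : 0 < r := by positivity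
  have hr1 : r < 1 := Real.rpow_lt_one_of_one_lt_of_neg one_lt_two hs
  refine ⟨D * 2 ^ ρ / (1 - r), by have := sub_pos.2 hr1; positivity, fun x hx => ?_⟩
  obtain ⟨n, hn⟩ := pow_unbounded_of_one_lt x⁻¹ one_lt_two
  refine (lintegral_Ioo_le_geom_sum hβ hD0 hD hx ((inv_lt_iff_one_lt_mul₀ hx).1 hn).le).trans
    (ENNReal.ofReal_le_ofReal ?_)
  have hsum := geom_sum_Ico_le_of_lt_one (m := 0) (n := n) hr0.le hr1
  rw [← Finset.range_eq_Ico, pow_zero] at hsum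
  calc D * 2 ^ ρ * x ^ (β + ρ) * ∑ j ∈ Finset.range n, r ^ j
      ≤ D * 2 ^ ρ * x ^ (β + ρ) * (1 / (1 - r)) := mul_le_mul_of_nonneg_left hsum (by positivity)
    _ = D * 2 ^ ρ / (1 - r) * x ^ (β + ρ) := by ring

theorem exists_lintegral_Ioo_le_of_pos {β : ℝ} (hβ : β ≤ 0) (hs : 0 < β + ρ) (hD0 : 0 ≤ D)
    (hD : ∀ t > 0, ∫⁻ y in Ioc (0 : ℝ) t, ofReal y ∂m ≤ ofReal (D * t ^ ρ)) :
    ∃ K : ℝ, 0 ≤ K ∧ ∀ x ∈ Ioo (0 : ℝ) 1,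
      ∫⁻ y in Ioo x 1, ofReal (y ^ β) * ofReal y ∂m ≤ ofReal K := by
  set r : ℝ := 2 ^ (β + ρ)
  have hr1 : 1 < r := Real.one_lt_rpow one_lt_two hs
  refine ⟨D * 2 ^ ρ * r / (r - 1), by have := sub_pos.2 hr1; positivity, ?_⟩
  rintro x ⟨hx0, hx1⟩
  obtain ⟨n, hn, hn'⟩ := exists_nat_pow_near (one_le_inv₀ hx0 |>.2 hx1.le) one_lt_two
  refine (lintegral_Ioo_le_geom_sum hβ hD0 hD hx0 ((inv_lt_iff_one_lt_mul₀ hx0).1 hn').le).trans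
    (ENNReal.ofReal_le_ofReal ?_)
  have h2n : 2 ^ n * x ≤ 1 := by
    calc 2 ^ n * x ≤ x⁻¹ * x := by gcongr
      _ = 1 := inv_mul_cancel₀ hx0.ne'
  have hxr : x ^ (β + ρ) * r ^ (n + 1) ≤ r := by
    rw [Real.rpow_pow_comm zero_le_two, ← Real.mul_rpow hx0.le (by positivity)]
    refine Real.rpow_le_rpow (by positivity) ?_ hs.le
    rw [pow_succ]
    linarith
  have hxs : 0 ≤ x ^ (β + ρ) := by positivity
  rw [geom_sum_eq hr1.ne']
  calc D * 2 ^ ρ * x ^ (β + ρ) * ((r ^ (n + 1) - 1) / (r - 1))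
      = D * 2 ^ ρ * (x ^ (β + ρ) * (r ^ (n + 1) - 1)) / (r - 1) := by ring
    _ ≤ D * 2 ^ ρ * r / (r - 1) :=
      div_le_div_of_nonneg_right (mul_le_mul_of_nonneg_left (by linarith) (by positivity))
        (sub_pos.2 hr1).le

theorem exists_lintegral_Ioo_le_rpow {β : ℝ} (hβ : β ≤ 0) (hβρ : β + ρ ≠ 0) (hD0 : 0 ≤ D)
    (hD : ∀ t > 0, ∫⁻ y in Ioc (0 : ℝ) t, ofReal y ∂m ≤ ofReal (D * t ^ ρ)) :
    ∃ K : ℝ, 0 ≤ K ∧ ∀ x ∈ Ioo (0 : ℝ) 1,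
      ∫⁻ y in Ioo x 1, ofReal (y ^ β) * ofReal y ∂m ≤ ofReal (K * x ^ min (β + ρ) 0) := by
  rcases hβρ.lt_or_gt with hs | hs
  · obtain ⟨K, hK0, hK⟩ := exists_lintegral_Ioo_le_rpow_of_neg hβ hs hD0 hD
    exact ⟨K, hK0, fun x hx => by simpa [min_eq_left hs.le] using hK x hx.1⟩
  · obtain ⟨K, hK0, hK⟩ := exists_lintegral_Ioo_le_of_pos hβ hs hD0 hD
    exact ⟨K, hK0, fun x hx => by simpa [min_eq_right hs.le] using hK x hx⟩

theorem lintegral_Ioc_min_mul_rpow_le {α x : ℝ} (hα0 : 0 ≤ α)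
    (hD : ∀ t > 0, ∫⁻ y in Ioc (0 : ℝ) t, ofReal y ∂m ≤ ofReal (D * t ^ ρ)) (hx : 0 < x) :
    ∫⁻ y in Ioc 0 x, ofReal (min x y) * ofReal (y ^ α) ∂m ≤ ofReal (D * x ^ (α + ρ)) :=
  calc _ ≤ ∫⁻ y in Ioc 0 x, ofReal (x ^ α) * ofReal y ∂m := by
        refine setLIntegral_mono' measurableSet_Ioc fun y hy => ?_
        rw [mul_comm]
        exact mul_le_mul' (ENNReal.ofReal_le_ofReal (Real.rpow_le_rpow hy.1.le hy.2 hα0))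
          (ENNReal.ofReal_le_ofReal (min_le_right x y))
    _ = ofReal (x ^ α) * ∫⁻ y in Ioc 0 x, ofReal y ∂m :=
        lintegral_const_mul' _ _ ENNReal.ofReal_ne_top
    _ ≤ ofReal (x ^ α) * ofReal (D * x ^ ρ) := by gcongr; exact hD x hx
    _ = _ := by
        rw [← ENNReal.ofReal_mul (by positivity), Real.rpow_add hx]
        ring_nf

theorem lintegral_Ioo_min_mul_rpow_le (α : ℝ) {x : ℝ} (hx : 0 < x) :
    ∫⁻ y in Ioo x 1, ofReal (min x y) * ofReal (y ^ α) ∂m ≤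
      ofReal x * ∫⁻ y in Ioo x 1, ofReal (y ^ (α - 1)) * ofReal y ∂m :=
  calc _ ≤ ∫⁻ y in Ioo x 1, ofReal x * (ofReal (y ^ (α - 1)) * ofReal y) ∂m := by
        refine setLIntegral_mono' measurableSet_Ioo fun y hy => ?_
        have hy0 : 0 < y := hx.trans hy.1
        rw [← ENNReal.ofReal_mul (Real.rpow_nonneg hy0.le (α - 1)), ← Real.rpow_add_one hy0.ne',
          sub_add_cancel]
        exact mul_le_mul' (ENNReal.ofReal_le_ofReal (min_le_left x y)) le_rfl
    _ = _ := lintegral_const_mul' _ _ ENNReal.ofReal_ne_top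

theorem exists_lintegral_min_mul_rpow_le {α : ℝ} (hα0 : 0 ≤ α) (hα1 : α ≤ 1)
    (hαρ : α + ρ ≠ 1) (hD0 : 0 ≤ D)
    (hD : ∀ t > 0, ∫⁻ y in Ioc (0 : ℝ) t, ofReal y ∂m ≤ ofReal (D * t ^ ρ)) :
    ∃ K : ℝ, 0 ≤ K ∧ ∀ x ∈ Ioo (0 : ℝ) 1,
      ∫⁻ y in Ioo (0 : ℝ) 1, ofReal (min x y) * ofReal (y ^ α) ∂m ≤
        ofReal (K * x ^ min (α + ρ) 1) := by
  obtain ⟨K, hK0, hK⟩ := exists_lintegral_Ioo_le_rpow (β := α - 1) (by linarith)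
    (by contrapose! hαρ; linarith) hD0 hD
  refine ⟨D + K, by positivity, ?_⟩
  rintro x ⟨hx0, hx1⟩
  set γ := min (α + ρ) 1
  have hγ : x * x ^ min (α - 1 + ρ) 0 = x ^ γ := by
    rw [mul_comm, ← Real.rpow_add_one hx0.ne', ← min_add_add_right]
    simp only [γ]
    ring_nf
  have head : ∫⁻ y in Ioc 0 x, ofReal (min x y) * ofReal (y ^ α) ∂m ≤ ofReal (D * x ^ γ) :=
    (lintegral_Ioc_min_mul_rpow_le hα0 hD hx0).trans <| ENNReal.ofReal_le_ofReal <|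
      mul_le_mul_of_nonneg_left (Real.rpow_le_rpow_of_exponent_ge hx0 hx1.le (min_le_left _ _)) hD0
  have tail : ∫⁻ y in Ioo x 1, ofReal (min x y) * ofReal (y ^ α) ∂m ≤ ofReal (K * x ^ γ) :=
    calc _ ≤ ofReal x * ofReal (K * x ^ min (α - 1 + ρ) 0) :=
          (lintegral_Ioo_min_mul_rpow_le α hx0).trans (by gcongr; exact hK x ⟨hx0, hx1⟩)
      _ = _ := by
          rw [← ENNReal.ofReal_mul hx0.le, ← hγ]
          ring_nf
  have hxγ : 0 ≤ x ^ γ := by positivity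
  calc _ = ∫⁻ y in Ioc 0 x ∪ Ioo x 1, ofReal (min x y) * ofReal (y ^ α) ∂m := by
        rw [Ioc_union_Ioo_eq_Ioo hx0.le hx1]
    _ ≤ ofReal (D * x ^ γ) + ofReal (K * x ^ γ) :=
        (lintegral_union_le _ _ _).trans (add_le_add head tail)
    _ = _ := by
        rw [← ENNReal.ofReal_add (by positivity) (by positivity)]
        ring_nf

theorem lintegral_Ici_one_min_mul_le (hm : ∫⁻ y in Ioi (0 : ℝ), ofReal y ∂m < ⊤)
    {f : ℝ → ℝ≥0∞} {B : ℝ≥0∞} (hB : B ≠ ⊤) (hf : ∀ y, f y ≤ B) (x : ℝ) :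
    ∫⁻ y in Ici (1 : ℝ), ofReal (min x y) * f y ∂m ≤
      ofReal ((B * ∫⁻ y in Ioi (0 : ℝ), ofReal y ∂m).toReal * x) :=
  calc _ ≤ ∫⁻ y in Ici 1, ofReal x * B * ofReal y ∂m := by
        refine setLIntegral_mono' measurableSet_Ici fun y hy => ?_
        calc ofReal (min x y) * f y ≤ ofReal x * B :=
              mul_le_mul' (ENNReal.ofReal_le_ofReal (min_le_left x y)) (hf y)
          _ ≤ ofReal x * B * ofReal y := le_mul_of_one_le_right' (by simpa using hy)
    _ = ofReal x * B * ∫⁻ y in Ici 1, ofReal y ∂m := lintegral_const_mul' _ _ (by finiteness)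
    _ ≤ ofReal x * B * ∫⁻ y in Ioi (0 : ℝ), ofReal y ∂m := by
        gcongr
        exact one_pos
    _ = _ := by
        rw [ENNReal.ofReal_mul ENNReal.toReal_nonneg,
          ENNReal.ofReal_toReal (ENNReal.mul_ne_top hB hm.ne)]
        ring

theorem exists_absMoment_succ_le_rpow (hm : ∫⁻ y in Ioi (0 : ℝ), ofReal y ∂m < ⊤)
    {k : ℕ} {α c : ℝ} (hα0 : 0 ≤ α) (hα1 : α ≤ 1) (hαρ : α + ρ ≠ 1) (hD0 : 0 ≤ D)
    (hD : ∀ t > 0, ∫⁻ y in Ioc (0 : ℝ) t, ofReal y ∂m ≤ ofReal (D * t ^ ρ)) (hc : 0 ≤ c)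
    (hk : ∀ y ∈ Ioo (0 : ℝ) 1, absMoment m k y ≤ ofReal (c * y ^ α)) :
    ∃ c' : ℝ, 0 ≤ c' ∧ ∀ x ∈ Ioo (0 : ℝ) 1,
      absMoment m (k + 1) x ≤ ofReal (c' * x ^ min (α + ρ) 1) := by
  obtain ⟨K, hK0, hK⟩ := exists_lintegral_min_mul_rpow_le hα0 hα1 hαρ hD0 hD
  obtain ⟨B, hB, hMB⟩ := exists_absMoment_le hm k
  set E := (B * ∫⁻ y in Ioi (0 : ℝ), ofReal y ∂m).toReal
  refine ⟨2 * (k + 1) * (c * K + E), by positivity, ?_⟩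
  rintro x ⟨hx0, hx1⟩
  set γ := min (α + ρ) 1
  have hxγ : x ≤ x ^ γ := by
    simpa using Real.rpow_le_rpow_of_exponent_ge hx0 hx1.le (min_le_right (α + ρ) 1)
  have near : ∫⁻ y in Ioo 0 1, ofReal (min x y) * absMoment m k y ∂m ≤ ofReal (c * K * x ^ γ) :=
    calc _ ≤ ∫⁻ y in Ioo 0 1, ofReal c * (ofReal (min x y) * ofReal (y ^ α)) ∂m := by
          refine setLIntegral_mono' measurableSet_Ioo fun y hy => ?_
          calc ofReal (min x y) * absMoment m k y ≤ ofReal (min x y) * ofReal (c * y ^ α) :=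
                mul_le_mul' le_rfl (hk y hy)
            _ = _ := by rw [ENNReal.ofReal_mul hc]; ring
      _ = ofReal c * ∫⁻ y in Ioo 0 1, ofReal (min x y) * ofReal (y ^ α) ∂m :=
          lintegral_const_mul' _ _ ENNReal.ofReal_ne_top
      _ ≤ ofReal c * ofReal (K * x ^ γ) := by gcongr; exact hK x ⟨hx0, hx1⟩
      _ = _ := by rw [← ENNReal.ofReal_mul hc, mul_assoc]
  have far : ∫⁻ y in Ici 1, ofReal (min x y) * absMoment m k y ∂m ≤ ofReal (E * x ^ γ) :=
    (lintegral_Ici_one_min_mul_le hm hB hMB x).trans (by gcongr)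
  calc absMoment m (k + 1) x
      = ((2 * (k + 1) : ℕ) : ℝ≥0∞) *
          ∫⁻ y in Ioo 0 1 ∪ Ici 1, ofReal (min x y) * absMoment m k y ∂m := by
        rw [absMoment_succ, Ioo_union_Ici_eq_Ioi one_pos]
    _ ≤ ((2 * (k + 1) : ℕ) : ℝ≥0∞) * (ofReal (c * K * x ^ γ) + ofReal (E * x ^ γ)) := by
        gcongr
        exact (lintegral_union_le _ _ _).trans (add_le_add near far)
    _ = _ := by
        have : 0 ≤ x ^ γ := by positivity
        rw [← ENNReal.ofReal_add (by positivity) (by positivity), ← ENNReal.ofReal_natCast,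
          ← ENNReal.ofReal_mul (by positivity)]
        push_cast
        ring_nf

theorem min_natCast_mul_add_ne_one {ρ : ℝ} (hρ : 0 < ρ) (hirr : Irrational ρ) (k : ℕ) :
    min ((k : ℝ) * ρ) 1 + ρ ≠ 1 := by
  rcases le_total 1 ((k : ℝ) * ρ) with hk | hk
  · rw [min_eq_right hk]
    linarith
  · rw [min_eq_left hk]
    simpa [add_one_mul] using (hirr.natCast_mul k.succ_ne_zero).ne_one

theorem min_min_natCast_mul_add {ρ : ℝ} (hρ : 0 ≤ ρ) (k : ℕ) :
    min (min ((k : ℝ) * ρ) 1 + ρ) 1 = min (((k + 1 : ℕ) : ℝ) * ρ) 1 := by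
  rw [← min_add_add_right, min_assoc, min_eq_right (by linarith : (1 : ℝ) ≤ 1 + ρ)]
  push_cast
  ring_nf

theorem exists_absMoment_le_rpow_of_irrational (hm : ∫⁻ y in Ioi (0 : ℝ), ofReal y ∂m < ⊤)
    (hρ : 0 < ρ) (hirr : Irrational ρ) (hD0 : 0 ≤ D)
    (hD : ∀ t > 0, ∫⁻ y in Ioc (0 : ℝ) t, ofReal y ∂m ≤ ofReal (D * t ^ ρ)) (k : ℕ) :
    ∃ Ck : ℝ, 0 < Ck ∧ ∀ x ∈ Ioo (0 : ℝ) 1,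
      absMoment m k x ≤ ofReal (Ck * x ^ min ((k : ℝ) * ρ) 1) := by
  induction k with
  | zero => exact ⟨1, one_pos, fun x _ => by simp [absMoment]⟩
  | succ k ih =>
    obtain ⟨c, hc, hk⟩ := ih
    obtain ⟨c', hc', hk'⟩ := exists_absMoment_succ_le_rpow hm (le_min (by positivity) zero_le_one)
      (min_le_right _ _) (min_natCast_mul_add_ne_one hρ hirr k) hD0 hD hc.le hk
    refine ⟨c' + 1, by positivity, fun x hx => (hk' x hx).trans (ENNReal.ofReal_le_ofReal ?_)⟩
    rw [min_min_natCast_mul_add hρ.le]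
    have : 0 ≤ x ^ min (((k + 1 : ℕ) : ℝ) * ρ) 1 := Real.rpow_nonneg hx.1.le _
    nlinarith

theorem exists_absMoment_le_rpow (hm : ∫⁻ y in Ioi (0 : ℝ), ofReal y ∂m < ⊤) {C : ℝ}
    (hρ : 0 < ρ) (hirr : Irrational ρ)
    (hI : ∀ x ∈ Ioo (0 : ℝ) 1, ∫⁻ z in Ioo (0 : ℝ) x, ofReal z ∂m ≤ ofReal (C * x ^ ρ))
    (k : ℕ) :
    ∃ Ck : ℝ, 0 < Ck ∧ ∀ x ∈ Ioo (0 : ℝ) 1,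
      absMoment m k x ≤ ofReal (Ck * x ^ min ((k : ℝ) * ρ) 1) := by
  obtain ⟨D, hD0, hD⟩ := exists_lintegral_Ioc_le_rpow hm hρ.le hI
  exact exists_absMoment_le_rpow_of_irrational hm hρ hirr hD0 hD k

theorem exists_absMoment_le_mul (hm : ∫⁻ y in Ioi (0 : ℝ), ofReal y ∂m < ⊤) {C : ℝ}
    (hC : 0 ≤ C) (hρ : 0 < ρ)
    (hI : ∀ x ∈ Ioo (0 : ℝ) 1, ∫⁻ z in Ioo (0 : ℝ) x, ofReal z ∂m ≤ ofReal (C * x ^ ρ)) :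
    ∃ k : ℕ, 1 ≤ k ∧ ∃ C' : ℝ, 0 < C' ∧ ∀ x ∈ Ioo (0 : ℝ) 1,
      absMoment m k x ≤ ofReal (C' * x) := by
  obtain ⟨ρ', hirr, hρ'0, hρ'ρ⟩ := exists_irrational_btwn hρ
  have hI' : ∀ x ∈ Ioo (0 : ℝ) 1,
      ∫⁻ z in Ioo (0 : ℝ) x, ofReal z ∂m ≤ ofReal (C * x ^ ρ') := fun x hx =>
    (hI x hx).trans <| ENNReal.ofReal_le_ofReal <| mul_le_mul_of_nonneg_left
      (Real.rpow_le_rpow_of_exponent_ge hx.1 hx.2.le hρ'ρ.le) hC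
  obtain ⟨k, hk⟩ := exists_nat_ge ρ'⁻¹
  have hkρ : 1 ≤ (k : ℝ) * ρ' := (inv_le_iff_one_le_mul₀ hρ'0).1 hk
  have hk1 : 1 ≤ k := Nat.one_le_iff_ne_zero.2 fun h => by norm_num [h] at hkρ
  obtain ⟨C', hC', hM⟩ := exists_absMoment_le_rpow hm hρ'0 hirr hI' k
  exact ⟨k, hk1, C', hC', fun x hx => by simpa [min_eq_right hkρ] using hM x hx⟩

theorem stmt0 (m : Measure ℝ)
    (hm : (∫⁻ y in Ioi (0 : ℝ), ENNReal.ofReal y ∂m) < ⊤) :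
    (∀ k : ℕ, ∃ B : ℝ≥0∞, B ≠ ⊤ ∧ ∀ x ∈ Ioi (0 : ℝ), absMoment m k x ≤ B) ∧
    (∀ C ρ : ℝ, 0 < C → 0 < ρ → Irrational ρ →
      (∀ x ∈ Ioo (0 : ℝ) 1,
        (∫⁻ z in Ioo (0 : ℝ) x, ENNReal.ofReal z ∂m) ≤ ENNReal.ofReal (C * x ^ ρ)) →
      ∀ k : ℕ, ∃ Ck : ℝ, 0 < Ck ∧ ∀ x ∈ Ioo (0 : ℝ) 1,
        absMoment m k x ≤ ENNReal.ofReal (Ck * x ^ (min ((k : ℝ) * ρ) 1))) ∧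
    (∀ C ρ : ℝ, 0 < C → 0 < ρ →
      (∀ x ∈ Ioo (0 : ℝ) 1,
        (∫⁻ z in Ioo (0 : ℝ) x, ENNReal.ofReal z ∂m) ≤ ENNReal.ofReal (C * x ^ ρ)) →
      ∃ k : ℕ, 1 ≤ k ∧ ∃ C' : ℝ, 0 < C' ∧ ∀ x ∈ Ioo (0 : ℝ) 1,
        absMoment m k x ≤ ENNReal.ofReal (C' * x)) := by
  refine ⟨fun k => ?_, fun C ρ _ hρ hirr hI => exists_absMoment_le_rpow hm hρ hirr hI,
    fun C ρ hC hρ hI => exists_absMoment_le_mul hm hC.le hρ hI⟩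
  obtain ⟨B, hB, hMB⟩ := exists_absMoment_le hm k
  exact ⟨B, hB, fun x _ => hMB x⟩
end

section
/- Let m be a nonnegative Borel measure on (0,∞). Then (1/2) ∫_{(0,1/2)} z dm(z) ≤ ∫_{(0,1)} z(1−z) dm(z) = ∫_0^1 x^{−2} ( ∫_{(0,x)} z² dm(z) ) dx ≤ ∫_0^1 (1/x) · sup_{0<y≤x} ( (1/y) ∫_{(0,y)} z² dm(z) ) dx. In particular, if the last integral is finite, then ∫_{(0,1)} z dm(z) < ∞. -/
open MeasureTheory Set

open Filter Topology ENNReal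

/-! Tonelli's theorem for the kernel `x⁻² 1_{z < x}` turns `∫₀¹ x⁻² ∫_{(0,x)} z² dm dx` into
`∫_{(0,1)} z² (z⁻¹ - 1) dm(z) = ∫_{(0,1)} z (1 - z) dm(z)`; local finiteness of `m` on `(0,∞)`
provides the σ-finiteness that Tonelli needs. Taking `y = x` in the supremum bounds the middle
integrand pointwise. Since `z ≤ 2 z (1 - z)` on `(0, 1/2)` and `m [1/2, 1] < ∞`, finiteness of
`∫ z (1 - z) dm` gives finiteness of `∫_{(0,1)} z dm`. -/

theorem measure_Icc_lt_top_of_finiteAtFilter_pos {m : Measure ℝ}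
    (hloc : ∀ x : ℝ, 0 < x → m.FiniteAtFilter (𝓝 x)) {a b : ℝ} (ha : 0 < a) : m (Icc a b) < ∞ :=
  isCompact_Icc.measure_lt_top_of_nhdsWithin fun x hx =>
    (hloc x (ha.trans_le hx.1)).filter_mono nhdsWithin_le_nhds

theorem sigmaFinite_restrict_Ioi_of_finiteAtFilter_pos {m : Measure ℝ}
    (hloc : ∀ x : ℝ, 0 < x → m.FiniteAtFilter (𝓝 x)) : SigmaFinite (m.restrict (Ioi 0)) := by
  refine Measure.sigmaFinite_of_countable (S := insert (Iic 0)
    (range fun n : ℕ => Icc ((n : ℝ) + 1)⁻¹ (n + 1))) ((countable_range _).insert _) ?_ ?_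
  · rintro s (rfl | ⟨n, rfl⟩)
    · simp [Measure.restrict_apply measurableSet_Iic, (Iic_disjoint_Ioi le_rfl).inter_eq]
    · exact (Measure.restrict_apply_le _ _).trans_lt
        (measure_Icc_lt_top_of_finiteAtFilter_pos hloc (by positivity))
  · refine eq_univ_of_forall fun x => ?_
    rcases le_or_gt x 0 with hx | hx
    · exact ⟨Iic 0, mem_insert _ _, hx⟩
    obtain ⟨n, hn⟩ := exists_nat_ge (max x x⁻¹)
    refine ⟨_, mem_insert_of_mem _ ⟨n, rfl⟩, ?_, by linarith [le_max_left x x⁻¹]⟩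
    rw [inv_le_comm₀ (by positivity) hx]
    linarith [le_max_right x x⁻¹]

theorem lintegral_mul_setLIntegral_Iio_comm {α : Type*} [MeasurableSpace α] [LinearOrder α]
    [TopologicalSpace α] [OrderClosedTopology α] [SecondCountableTopology α]
    [OpensMeasurableSpace α] {μ ν : Measure α} [SFinite μ] [SFinite ν] {f g : α → ℝ≥0∞}
    (hf : Measurable f) (hg : Measurable g) :
    ∫⁻ x, g x * ∫⁻ z in Iio x, f z ∂ν ∂μ = ∫⁻ z, f z * ∫⁻ x in Ioi z, g x ∂μ ∂ν := by
  let F : α → α → ℝ≥0∞ := fun x z =>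
    {p : α × α | p.2 < p.1}.indicator (fun p => g p.1 * f p.2) (x, z)
  have hF : Measurable (Function.uncurry F) :=
    ((hg.comp measurable_fst).mul (hf.comp measurable_snd)).indicator
      (measurableSet_lt measurable_snd measurable_fst)
  calc ∫⁻ x, g x * ∫⁻ z in Iio x, f z ∂ν ∂μ = ∫⁻ x, ∫⁻ z, F x z ∂ν ∂μ := by
        refine lintegral_congr fun x => ?_
        rw [← lintegral_const_mul _ hf, ← lintegral_indicator measurableSet_Iio]
        rfl
    _ = ∫⁻ z, ∫⁻ x, F x z ∂μ ∂ν := lintegral_lintegral_swap hF.aemeasurable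
    _ = ∫⁻ z, f z * ∫⁻ x in Ioi z, g x ∂μ ∂ν := by
        refine lintegral_congr fun z => ?_
        rw [← lintegral_const_mul _ hg, ← lintegral_indicator measurableSet_Ioi]
        refine lintegral_congr fun x => ?_
        simp only [F, indicator_apply, mem_ofPred_eq, mem_Ioi, mul_comm]

theorem lintegral_Ioo_one_div_sq {a b : ℝ} (ha : 0 < a) (hab : a ≤ b) :
    ∫⁻ x in Ioo a b, ENNReal.ofReal (1 / x ^ 2) = ENNReal.ofReal (1 / a - 1 / b) := by
  have hcont : ContinuousOn (fun x : ℝ => 1 / x ^ 2) (uIcc a b) := by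
    rw [uIcc_of_le hab]
    exact continuousOn_const.div (continuousOn_pow 2) fun x hx => by
      have := ha.trans_le hx.1; positivity
  have hderiv : ∀ x ∈ uIcc a b, HasDerivAt (fun y : ℝ => -(1 / y)) (1 / x ^ 2) x := by
    intro x hx
    rw [uIcc_of_le hab] at hx
    have hx0 : x ≠ 0 := (ha.trans_le hx.1).ne'
    simpa [one_div] using (hasDerivAt_inv hx0).fun_neg
  have hint := hcont.intervalIntegrable (μ := volume)
  rw [← ofReal_integral_eq_lintegral_ofReal
      ((intervalIntegrable_iff_integrableOn_Ioo_of_le hab).1 hint) (ae_of_all _ fun x => by positivity),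
    ← integral_Ioc_eq_integral_Ioo, ← intervalIntegral.integral_of_le hab,
    intervalIntegral.integral_eq_sub_of_hasDerivAt hderiv hint]
  congr 1
  ring

theorem half_mul_lintegral_Ioo_half_le_lintegral_mul_one_sub (m : Measure ℝ) :
    ENNReal.ofReal (1 / 2) * ∫⁻ z in Ioo (0 : ℝ) (1 / 2), ENNReal.ofReal z ∂m ≤
      ∫⁻ z in Ioo (0 : ℝ) 1, ENNReal.ofReal (z * (1 - z)) ∂m := by
  rw [← lintegral_const_mul' _ _ ofReal_ne_top]
  calc ∫⁻ z in Ioo (0 : ℝ) (1 / 2), ENNReal.ofReal (1 / 2) * ENNReal.ofReal z ∂m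
      ≤ ∫⁻ z in Ioo (0 : ℝ) (1 / 2), ENNReal.ofReal (z * (1 - z)) ∂m :=
        setLIntegral_mono' measurableSet_Ioo fun z hz => by
          rw [← ofReal_mul (by norm_num)]
          exact ofReal_le_ofReal (by nlinarith [hz.1, hz.2])
    _ ≤ ∫⁻ z in Ioo (0 : ℝ) 1, ENNReal.ofReal (z * (1 - z)) ∂m :=
        lintegral_mono_set (Ioo_subset_Ioo_right (by norm_num))

theorem lintegral_Ioo_mul_one_sub_eq (m : Measure ℝ) [SFinite (m.restrict (Ioo 0 1))] :
    ∫⁻ z in Ioo (0 : ℝ) 1, ENNReal.ofReal (z * (1 - z)) ∂m =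
      ∫⁻ x in Ioo (0 : ℝ) 1,
        ENNReal.ofReal (1 / x ^ 2) * ∫⁻ z in Ioo (0 : ℝ) x, ENNReal.ofReal (z ^ 2) ∂m := by
  have hswap := lintegral_mul_setLIntegral_Iio_comm (μ := volume.restrict (Ioo (0 : ℝ) 1))
    (ν := m.restrict (Ioo 0 1)) (f := fun z => ENNReal.ofReal (z ^ 2))
    (g := fun x => ENNReal.ofReal (1 / x ^ 2)) (by fun_prop) (by fun_prop)
  simp only [Measure.restrict_restrict measurableSet_Iio,
    Measure.restrict_restrict measurableSet_Ioi] at hswap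
  calc ∫⁻ z in Ioo (0 : ℝ) 1, ENNReal.ofReal (z * (1 - z)) ∂m
      = ∫⁻ z in Ioo (0 : ℝ) 1, ENNReal.ofReal (z ^ 2) *
          (∫⁻ x in Ioi z ∩ Ioo 0 1, ENNReal.ofReal (1 / x ^ 2)) ∂m := by
        refine setLIntegral_congr_fun measurableSet_Ioo fun z hz => ?_
        rw [inter_comm, Ioo_inter_Ioi, max_eq_right hz.1.le, lintegral_Ioo_one_div_sq hz.1 hz.2.le,
          ← ofReal_mul (sq_nonneg z)]
        congr 1
        field_simp [hz.1.ne']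
    _ = ∫⁻ x in Ioo (0 : ℝ) 1,
          ENNReal.ofReal (1 / x ^ 2) * ∫⁻ z in Ioo (0 : ℝ) x, ENNReal.ofReal (z ^ 2) ∂m := by
        rw [← hswap]
        refine setLIntegral_congr_fun measurableSet_Ioo fun x hx => ?_
        rw [inter_comm, Ioo_inter_Iio, min_eq_right hx.2.le]

theorem ofReal_one_div_sq_mul_le_ofReal_one_div_mul_iSup (G : ℝ → ℝ≥0∞) {x : ℝ} (hx : 0 < x) :
    ENNReal.ofReal (1 / x ^ 2) * G x ≤
      ENNReal.ofReal (1 / x) * ⨆ y ∈ Ioc 0 x, ENNReal.ofReal (1 / y) * G y := by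
  rw [sq, ← one_div_mul_one_div, ofReal_mul (by positivity), mul_assoc]
  gcongr
  exact le_biSup (fun y => ENNReal.ofReal (1 / y) * G y) ⟨hx, le_rfl⟩

theorem lintegral_Ioo_ofReal_le_two_mul_add_measure_Icc (m : Measure ℝ) :
    ∫⁻ z in Ioo (0 : ℝ) 1, ENNReal.ofReal z ∂m ≤
      2 * ∫⁻ z in Ioo (0 : ℝ) 1, ENNReal.ofReal (z * (1 - z)) ∂m + m (Icc (1 / 2) 1) := by
  calc ∫⁻ z in Ioo (0 : ℝ) 1, ENNReal.ofReal z ∂m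
      ≤ ∫⁻ z in Ioo (0 : ℝ) 1,
          2 * ENNReal.ofReal (z * (1 - z)) + (Icc (1 / 2 : ℝ) 1).indicator 1 z ∂m :=
        setLIntegral_mono' measurableSet_Ioo fun z hz => by
          by_cases h : z < 1 / 2
          · calc ENNReal.ofReal z ≤ ENNReal.ofReal (2 * (z * (1 - z))) :=
                  ofReal_le_ofReal (by nlinarith [hz.1])
              _ = 2 * ENNReal.ofReal (z * (1 - z)) := by
                  rw [ofReal_mul zero_le_two, ofReal_ofNat]
              _ ≤ _ := le_self_add
          · have hz' : z ∈ Icc (1 / 2 : ℝ) 1 := ⟨not_lt.1 h, hz.2.le⟩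
            rw [indicator_of_mem hz', Pi.one_apply]
            exact le_add_left (ofReal_le_one.2 hz.2.le)
    _ = 2 * ∫⁻ z in Ioo (0 : ℝ) 1, ENNReal.ofReal (z * (1 - z)) ∂m +
          (m.restrict (Ioo 0 1)) (Icc (1 / 2) 1) := by
        rw [lintegral_add_right _ (measurable_one.indicator measurableSet_Icc),
          lintegral_const_mul _ (by fun_prop), lintegral_indicator_one measurableSet_Icc]
    _ ≤ _ := by grw [Measure.restrict_apply_le]

theorem stmt2 (m : Measure ℝ)
    (hloc : ∀ x : ℝ, 0 < x → ∃ s ∈ nhds x, m s < ⊤) :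
    (ENNReal.ofReal (1 / 2) * (∫⁻ z in Ioo (0 : ℝ) (1 / 2), ENNReal.ofReal z ∂m) ≤
        ∫⁻ z in Ioo (0 : ℝ) 1, ENNReal.ofReal (z * (1 - z)) ∂m) ∧
    ((∫⁻ z in Ioo (0 : ℝ) 1, ENNReal.ofReal (z * (1 - z)) ∂m) =
        ∫⁻ x in Ioo (0 : ℝ) 1,
          ENNReal.ofReal (1 / x ^ 2) * (∫⁻ z in Ioo (0 : ℝ) x, ENNReal.ofReal (z ^ 2) ∂m)) ∧
    ((∫⁻ x in Ioo (0 : ℝ) 1,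
          ENNReal.ofReal (1 / x ^ 2) * (∫⁻ z in Ioo (0 : ℝ) x, ENNReal.ofReal (z ^ 2) ∂m)) ≤
        ∫⁻ x in Ioo (0 : ℝ) 1,
          ENNReal.ofReal (1 / x) *
            (⨆ y ∈ Ioc (0 : ℝ) x,
              ENNReal.ofReal (1 / y) * (∫⁻ z in Ioo (0 : ℝ) y, ENNReal.ofReal (z ^ 2) ∂m))) ∧
    ((∫⁻ x in Ioo (0 : ℝ) 1,
          ENNReal.ofReal (1 / x) *
            (⨆ y ∈ Ioc (0 : ℝ) x,
              ENNReal.ofReal (1 / y) * (∫⁻ z in Ioo (0 : ℝ) y, ENNReal.ofReal (z ^ 2) ∂m))) < ⊤ →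
      (∫⁻ z in Ioo (0 : ℝ) 1, ENNReal.ofReal z ∂m) < ⊤) := by
  have : SFinite (m.restrict (Ioo 0 1)) := by
    have := sigmaFinite_restrict_Ioi_of_finiteAtFilter_pos hloc
    rw [← Measure.restrict_restrict_of_subset Ioo_subset_Ioi_self]
    infer_instance
  have hmid := lintegral_Ioo_mul_one_sub_eq m
  have hsup := setLIntegral_mono' (μ := volume) measurableSet_Ioo fun x (hx : x ∈ Ioo (0 : ℝ) 1) =>
    ofReal_one_div_sq_mul_le_ofReal_one_div_mul_iSup
      (fun y => ∫⁻ z in Ioo (0 : ℝ) y, ENNReal.ofReal (z ^ 2) ∂m) hx.1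
  refine ⟨half_mul_lintegral_Ioo_half_le_lintegral_mul_one_sub m, hmid, hsup, fun hfin => ?_⟩
  calc _ ≤ _ := lintegral_Ioo_ofReal_le_two_mul_add_measure_Icc m
    _ < ⊤ := add_lt_top.2 ⟨mul_lt_top ofNat_lt_top ((hmid.trans_le hsup).trans_lt hfin),
      measure_Icc_lt_top_of_finiteAtFilter_pos hloc (by norm_num)⟩
end

section
/- Let ε > 0, C > 0, x₀ > 1, and let m̃ be a locally finite nonnegative Borel measure on (0,∞) whose restriction to (x₀,∞) is absolutely continuous with respect to Lebesgue measure with density g satisfying g(z) ≤ C / ( z² (log z)^{1+ε} ) for all z > x₀. Then ∫_1^∞ (1/x) · sup_{y≥x} ( y · m̃((y,∞)) ) dx < ∞. -/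
/-! Integrating the density bound against `z⁻²` gives `m̃((y,∞)) ≤ C / (y (log y)^{1+ε})` for
`y ≥ x₀`, so `sup_{y ≥ x} y m̃((y,∞)) ≤ C / (log x)^{1+ε}` there, and `1 / (x (log x)^{1+ε})` is
integrable at infinity, with antiderivative `(log x)^{-ε} / (-ε)`. On `(1, x₀]` the supremum is
bounded because `m̃` is finite on the compact `[1, x₀]`. -/

open MeasureTheory Set

lemma lintegral_Ioi_rpow_neg_two {y : ℝ} (hy : 0 < y) :
    ∫⁻ z in Ioi y, ENNReal.ofReal (z ^ (-2 : ℝ)) = ENNReal.ofReal y⁻¹ := by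
  rw [← ofReal_integral_eq_lintegral_ofReal (integrableOn_Ioi_rpow_of_lt (by norm_num) hy)
    ((ae_restrict_iff' measurableSet_Ioi).2 (.of_forall fun z hz =>
      Real.rpow_nonneg (hy.trans hz).le _)), integral_Ioi_rpow_of_lt (by norm_num) hy]
  norm_num [Real.rpow_neg_one]

lemma measure_Ioi_le_of_density_le {μ : Measure ℝ} {g : ℝ → ℝ} {K y : ℝ} (hy : 0 < y)
    (hμ : μ (Ioi y) = ∫⁻ z in Ioi y, ENNReal.ofReal (g z))
    (hg : ∀ z, y < z → g z ≤ K * z ^ (-2 : ℝ)) : μ (Ioi y) ≤ ENNReal.ofReal (K / y) := by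
  calc μ (Ioi y) = ∫⁻ z in Ioi y, ENNReal.ofReal (g z) := hμ
    _ ≤ ∫⁻ z in Ioi y, ENNReal.ofReal K * ENNReal.ofReal (z ^ (-2 : ℝ)) := by
      refine setLIntegral_mono' measurableSet_Ioi fun z hz => ?_
      rw [← ENNReal.ofReal_mul' (Real.rpow_nonneg (hy.trans hz).le _)]
      exact ENNReal.ofReal_le_ofReal (hg z hz)
    _ = ENNReal.ofReal (K / y) := by
      rw [lintegral_const_mul' _ _ ENNReal.ofReal_ne_top, lintegral_Ioi_rpow_neg_two hy,
        ← ENNReal.ofReal_mul' (inv_nonneg.2 hy.le), div_eq_mul_inv]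

lemma antitoneOn_div_log_rpow {C p : ℝ} (hC : 0 ≤ C) (hp : 0 ≤ p) :
    AntitoneOn (fun x => C / Real.log x ^ p) (Ioi 1) := fun x hx y _ hxy => by
  have hlx : 0 < Real.log x := Real.log_pos hx
  exact div_le_div_of_nonneg_left hC (Real.rpow_pos_of_pos hlx _)
    (Real.rpow_le_rpow hlx.le (Real.log_le_log (zero_lt_one.trans hx) hxy) hp)

lemma hasDerivAt_log_rpow_div {p x : ℝ} (hp : p ≠ 1) (hx : 1 < x) :
    HasDerivAt (fun t => Real.log t ^ (1 - p) / (1 - p)) (x⁻¹ * (Real.log x ^ p)⁻¹) x := by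
  have hlx : 0 < Real.log x := Real.log_pos hx
  refine (((Real.hasDerivAt_log (zero_lt_one.trans hx).ne').rpow_const
    (p := 1 - p) (.inl hlx.ne')).div_const (1 - p)).congr_deriv ?_
  rw [sub_sub_cancel_left, Real.rpow_neg hlx.le]
  field_simp [sub_ne_zero.2 hp.symm]

lemma integrableOn_Ioi_inv_mul_inv_log_rpow {p a : ℝ} (hp : 1 < p) (ha : 1 < a) :
    IntegrableOn (fun x => x⁻¹ * (Real.log x ^ p)⁻¹) (Ioi a) := by
  refine integrableOn_Ioi_deriv_of_nonneg'
    (fun x hx => hasDerivAt_log_rpow_div hp.ne' (ha.trans_le hx)) (fun x hx => ?_) (l := 0) ?_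
  · have hx1 : 1 < x := ha.trans hx
    exact mul_nonneg (inv_nonneg.2 (zero_lt_one.trans hx1).le)
      (inv_nonneg.2 (Real.rpow_nonneg (Real.log_pos hx1).le _))
  · simpa using ((tendsto_rpow_neg_atTop (by linarith : 0 < p - 1)).comp
      Real.tendsto_log_atTop).div_const (1 - p)

section DensityBound

variable {p C x₀ : ℝ} {μ : Measure ℝ} {g : ℝ → ℝ}

lemma measure_Ioi_le_div_log_rpow (hp : 0 ≤ p) (hC : 0 ≤ C) (hx₀ : 1 < x₀)
    (hdens : ∀ s : Set ℝ, MeasurableSet s → s ⊆ Ioi x₀ →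
      μ s = ∫⁻ z in s, ENNReal.ofReal (g z))
    (hgb : ∀ z : ℝ, x₀ < z → g z ≤ C / (z ^ 2 * Real.log z ^ p)) {y : ℝ} (hy : x₀ ≤ y) :
    μ (Ioi y) ≤ ENNReal.ofReal (C / Real.log y ^ p / y) := by
  refine measure_Ioi_le_of_density_le (by linarith)
    (hdens _ measurableSet_Ioi (Ioi_subset_Ioi hy)) fun z hz => (hgb z (hy.trans_lt hz)).trans ?_
  have hz0 : 0 < z := by linarith
  rw [Real.rpow_neg hz0.le, Real.rpow_two, ← div_eq_mul_inv, mul_comm (z ^ 2), ← div_div]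
  exact div_le_div_of_nonneg_right
    (antitoneOn_div_log_rpow hC hp (hx₀.trans_le hy) (hx₀.trans_le (hy.trans hz.le)) hz.le)
    (by positivity)

lemma iSup_mul_measure_Ioi_le_div_log_rpow (hp : 0 ≤ p) (hC : 0 ≤ C) (hx₀ : 1 < x₀)
    (htail : ∀ y, x₀ ≤ y → μ (Ioi y) ≤ ENNReal.ofReal (C / Real.log y ^ p / y))
    {x : ℝ} (hx : x₀ ≤ x) :
    ⨆ y ∈ Ici x, ENNReal.ofReal y * μ (Ioi y) ≤ ENNReal.ofReal (C / Real.log x ^ p) := by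
  refine iSup₂_le fun y (hxy : x ≤ y) => ?_
  have hy0 : 0 < y := by linarith
  calc ENNReal.ofReal y * μ (Ioi y)
      ≤ ENNReal.ofReal y * ENNReal.ofReal (C / Real.log y ^ p / y) :=
        mul_le_mul_right (htail y (hx.trans hxy)) _
    _ = ENNReal.ofReal (C / Real.log y ^ p) := by
        rw [← ENNReal.ofReal_mul hy0.le, mul_div_cancel₀ _ hy0.ne']
    _ ≤ ENNReal.ofReal (C / Real.log x ^ p) := ENNReal.ofReal_le_ofReal <|
        antitoneOn_div_log_rpow hC hp (hx₀.trans_le hx) (hx₀.trans_le (hx.trans hxy)) hxy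

lemma iSup_mul_measure_Ioi_lt_top (hp : 0 ≤ p) (hC : 0 ≤ C) (hx₀ : 1 < x₀)
    (hloc : ∀ x : ℝ, 0 < x → ∃ s ∈ nhds x, μ s < ⊤)
    (htail : ∀ y, x₀ ≤ y → μ (Ioi y) ≤ ENNReal.ofReal (C / Real.log y ^ p / y)) :
    ⨆ y ∈ Ici 1, ENNReal.ofReal y * μ (Ioi y) < ⊤ := by
  have hIcc : μ (Icc 1 x₀) < ⊤ := isCompact_Icc.measure_lt_top_of_nhdsWithin fun x hx =>
    Measure.FiniteAtFilter.filter_mono nhdsWithin_le_nhds (hloc x (by linarith [hx.1]))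
  have hIoi_one : μ (Ioi 1) < ⊤ :=
    (measure_mono (Ioi_subset_Ici_self.trans (Icc_union_Ioi_eq_Ici hx₀.le).symm.subset)).trans_lt
      ((measure_union_le _ _).trans_lt
        (ENNReal.add_lt_top.2 ⟨hIcc, (htail x₀ le_rfl).trans_lt ENNReal.ofReal_lt_top⟩))
  refine lt_of_le_of_lt (b := ENNReal.ofReal x₀ * μ (Ioi 1) + ENNReal.ofReal (C / Real.log x₀ ^ p))
    (iSup₂_le fun y (hy : 1 ≤ y) => ?_)
    (ENNReal.add_lt_top.2 ⟨ENNReal.mul_lt_top ENNReal.ofReal_lt_top hIoi_one, ENNReal.ofReal_lt_top⟩)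
  rcases le_or_gt y x₀ with hyx₀ | hx₀y
  · exact le_add_right (mul_le_mul' (ENNReal.ofReal_le_ofReal hyx₀)
      (measure_mono (Ioi_subset_Ioi hy)))
  · exact le_add_left ((iSup_mul_measure_Ioi_le_div_log_rpow hp hC hx₀ htail le_rfl).trans'
      (le_iSup₂_of_le y hx₀y.le le_rfl))

lemma setLIntegral_Ioi_inv_mul_iSup_mul_measure_Ioi_lt_top (hp : 1 < p) (hC : 0 ≤ C)
    (hx₀ : 1 < x₀)
    (htail : ∀ y, x₀ ≤ y → μ (Ioi y) ≤ ENNReal.ofReal (C / Real.log y ^ p / y)) :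
    ∫⁻ x in Ioi x₀, ENNReal.ofReal (1 / x) * (⨆ y ∈ Ici x, ENNReal.ofReal y * μ (Ioi y)) < ⊤ := by
  calc _ ≤ ∫⁻ x in Ioi x₀, ENNReal.ofReal C * ENNReal.ofReal (x⁻¹ * (Real.log x ^ p)⁻¹) :=
        setLIntegral_mono' measurableSet_Ioi fun x (hx : x₀ < x) => by
          have hx0 : 0 < x := by linarith
          calc _ ≤ ENNReal.ofReal (1 / x) * ENNReal.ofReal (C / Real.log x ^ p) :=
                mul_le_mul_right
                  (iSup_mul_measure_Ioi_le_div_log_rpow (by linarith) hC hx₀ htail hx.le) _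
            _ = _ := by
                rw [← ENNReal.ofReal_mul (by positivity), ← ENNReal.ofReal_mul hC]
                congr 1; ring
    _ < ⊤ := by
        rw [lintegral_const_mul' _ _ ENNReal.ofReal_ne_top]
        exact ENNReal.mul_lt_top ENNReal.ofReal_lt_top
          (integrableOn_Ioi_inv_mul_inv_log_rpow hp hx₀).lintegral_lt_top

end DensityBound

theorem stmt3 (ε C x₀ : ℝ) (hε : 0 < ε) (hC : 0 < C) (hx₀ : 1 < x₀)
    (mt : Measure ℝ) (hloc : ∀ x : ℝ, 0 < x → ∃ s ∈ nhds x, mt s < ⊤)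
    (g : ℝ → ℝ)
    (hdens : ∀ s : Set ℝ, MeasurableSet s → s ⊆ Ioi x₀ →
      mt s = ∫⁻ z in s, ENNReal.ofReal (g z))
    (hgb : ∀ z : ℝ, x₀ < z → g z ≤ C / (z ^ 2 * Real.log z ^ (1 + ε))) :
    (∫⁻ x in Ioi (1 : ℝ),
      ENNReal.ofReal (1 / x) * (⨆ y ∈ Ici x, ENNReal.ofReal y * mt (Ioi y))) < ⊤ := by
  have hp : (0 : ℝ) ≤ 1 + ε := by linarith
  have htail := fun y => measure_Ioi_le_div_log_rpow (μ := mt) hp hC.le hx₀ hdens hgb (y := y)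
  rw [← Ioc_union_Ioi_eq_Ioi hx₀.le, lintegral_union measurableSet_Ioi (Ioc_disjoint_Ioi le_rfl)]
  refine ENNReal.add_lt_top.2 ⟨?_, ?_⟩
  · calc _ ≤ ∫⁻ _ in Ioc 1 x₀, ⨆ y ∈ Ici 1, ENNReal.ofReal y * mt (Ioi y) :=
          setLIntegral_mono' measurableSet_Ioc fun x hx => mul_le_of_le_one_of_le
            (ENNReal.ofReal_le_one.2 (div_le_one_of_le₀ hx.1.le (by linarith [hx.1])))
            (biSup_mono fun y hy => le_trans hx.1.le hy)
      _ < ⊤ := by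
          rw [setLIntegral_const]
          exact ENNReal.mul_lt_top (iSup_mul_measure_Ioi_lt_top hp hC.le hx₀ hloc htail)
            measure_Ioc_lt_top
  · exact setLIntegral_Ioi_inv_mul_iSup_mul_measure_Ioi_lt_top (by linarith) hC.le hx₀ htail
end

section
/- Let ε > 0, C > 0, z₀ ∈ (0,1), and let m be a locally finite nonnegative Borel measure on (0,∞) whose restriction to (0,z₀) is absolutely continuous with respect to Lebesgue measure with density g satisfying g(z) ≤ C / ( z² (log(1/z))^{1+ε} ) for all z ∈ (0,z₀). Then ∫_0^1 (1/x) · sup_{0<y≤x} ( (1/y) ∫_{(0,y)} z² dm(z) ) dx < ∞. -/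
open MeasureTheory Set Topology ENNReal

/-!
Near `0` the density bound gives
`∫_{(0,y)} z² dm ≤ ∫₀^y C / log(1/z)^(1+ε) dz ≤ C y / log(1/y)^(1+ε)`,
because the integrand on the right increases in `z`. Hence the inner supremum at `x ≤ z₀` is at
most `C / log(1/x)^(1+ε)`, and `∫₀^{z₀} dx / (x log(1/x)^(1+ε)) < ∞` since `ε > 0`. On `[z₀, 1)`
the integrand is bounded, because `m` is finite on the compact interval `[z₀, 1]`.
-/

theorem setLIntegral_le_setLIntegral_mul_of_le_withDensity {α : Type*} [MeasurableSpace α]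
    {μ ν : Measure α} {U : Set α} {d f : α → ℝ≥0∞} (hU : MeasurableSet U) (hd : Measurable d)
    (hf : Measurable f) (h : ∀ s, MeasurableSet s → s ⊆ U → μ s ≤ ∫⁻ a in s, d a ∂ν) :
    ∫⁻ a in U, f a ∂μ ≤ ∫⁻ a in U, d a * f a ∂ν := by
  have hle : μ.restrict U ≤ (ν.withDensity d).restrict U := by
    refine Measure.le_iff.2 fun s hs => ?_
    rw [Measure.restrict_apply hs, Measure.restrict_apply hs, withDensity_apply _ (hs.inter hU)]
    exact h _ (hs.inter hU) inter_subset_right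
  calc ∫⁻ a in U, f a ∂μ ≤ ∫⁻ a in U, f a ∂ν.withDensity d := lintegral_mono' hle le_rfl
    _ = ∫⁻ a in U, d a * f a ∂ν := setLIntegral_withDensity_eq_setLIntegral_mul _ hd hf hU

theorem log_one_div_rpow_pos {z : ℝ} (p : ℝ) (h0 : 0 < z) (h1 : z < 1) :
    0 < Real.log (1 / z) ^ p :=
  Real.rpow_pos_of_pos (Real.log_pos (one_lt_one_div h0 h1)) p

theorem monotoneOn_div_log_one_div_rpow {C p : ℝ} (hC : 0 ≤ C) (hp : 0 ≤ p) :
    MonotoneOn (fun z => C / Real.log (1 / z) ^ p) (Ioo 0 1) := by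
  intro y hy x hx hyx
  have hlog : Real.log (1 / x) ≤ Real.log (1 / y) :=
    Real.log_le_log (one_div_pos.2 hx.1) (one_div_le_one_div_of_le hy.1 hyx)
  have hLx := log_one_div_rpow_pos p hx.1 hx.2
  dsimp only
  gcongr
  exact Real.log_nonneg (one_le_one_div hx.1 hx.2.le)

/-- Substituting `x = exp (-t)` turns this into the integrability of `t ^ (-p)` at infinity. -/
theorem integrableOn_one_div_mul_log_one_div_rpow {p a : ℝ} (hp : 1 < p) (ha0 : 0 < a)
    (ha1 : a < 1) : IntegrableOn (fun x => 1 / (x * Real.log (1 / x) ^ p)) (Ioo 0 a) := by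
  have hb : 0 < Real.log (1 / a) := Real.log_pos (one_lt_one_div ha0 ha1)
  have himg : (fun t => Real.exp (-t)) '' Ioi (Real.log (1 / a)) = Ioo 0 a := by
    rw [show (fun t => Real.exp (-t)) = Real.exp ∘ Neg.neg from rfl, image_comp, image_neg_Ioi,
      Real.image_exp_Iio, one_div, Real.log_inv, neg_neg, Real.exp_log ha0]
  have hderiv : ∀ t ∈ Ioi (Real.log (1 / a)),
      HasDerivWithinAt (fun t => Real.exp (-t)) (-Real.exp (-t)) (Ioi (Real.log (1 / a))) t :=
    fun t _ => by simpa using (hasDerivAt_neg t).exp.hasDerivWithinAt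
  rw [← himg, integrableOn_image_iff_integrableOn_abs_deriv_smul measurableSet_Ioi hderiv
    (Real.exp_injective.comp neg_injective).injOn]
  refine (integrableOn_Ioi_rpow_of_lt (by linarith : -p < -1) hb).congr_fun (fun t ht => ?_)
    measurableSet_Ioi
  have ht : 0 < t := hb.trans ht
  simp only [abs_neg, smul_eq_mul, one_div, Real.exp_neg, inv_inv,
    Real.log_exp, Real.rpow_neg ht.le]
  rw [abs_of_pos (inv_pos.2 (Real.exp_pos t))]
  field_simp

theorem setLIntegral_Ioo_ofReal_one_div_mul_lt_top {S : ℝ → ℝ≥0∞} {C p a : ℝ} (hp : 1 < p)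
    (ha0 : 0 < a) (ha1 : a < 1)
    (hS : ∀ x ∈ Ioo 0 a, S x ≤ ENNReal.ofReal (C / Real.log (1 / x) ^ p)) :
    ∫⁻ x in Ioo 0 a, ENNReal.ofReal (1 / x) * S x < ⊤ := by
  calc ∫⁻ x in Ioo 0 a, ENNReal.ofReal (1 / x) * S x
      ≤ ∫⁻ x in Ioo 0 a, ENNReal.ofReal (C * (1 / (x * Real.log (1 / x) ^ p))) :=
        setLIntegral_mono' measurableSet_Ioo fun x hx =>
          (mul_le_mul_right (hS x hx) _).trans_eq <| by
            rw [← ENNReal.ofReal_mul (one_div_nonneg.2 hx.1.le)]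
            congr 1
            ring
    _ < ⊤ := IntegrableOn.setLIntegral_lt_top <|
        (integrableOn_one_div_mul_log_one_div_rpow hp ha0 ha1).const_mul C

theorem setLIntegral_Ioo_sq_le {m : Measure ℝ} {C p z₀ : ℝ} (hC : 0 ≤ C) (hp : 0 ≤ p)
    (hz₀ : z₀ < 1) {g : ℝ → ℝ}
    (hdens : ∀ s : Set ℝ, MeasurableSet s → s ⊆ Ioo 0 z₀ →
      m s = ∫⁻ z in s, ENNReal.ofReal (g z))
    (hgb : ∀ z ∈ Ioo (0 : ℝ) z₀, g z ≤ C / (z ^ 2 * Real.log (1 / z) ^ p))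
    {y : ℝ} (hy : y ∈ Ioc 0 z₀) :
    ∫⁻ z in Ioo 0 y, ENNReal.ofReal (z ^ 2) ∂m ≤
      ENNReal.ofReal (y * (C / Real.log (1 / y) ^ p)) := by
  set b : ℝ → ℝ≥0∞ := fun z => ENNReal.ofReal (C / (z ^ 2 * Real.log (1 / z) ^ p))
  have hsub : Ioo 0 y ⊆ Ioo 0 z₀ := Ioo_subset_Ioo_right hy.2
  have hmb : ∀ s, MeasurableSet s → s ⊆ Ioo 0 y → m s ≤ ∫⁻ z in s, b z := fun s hs hs' => by
    rw [hdens s hs (hs'.trans hsub)]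
    exact setLIntegral_mono (by fun_prop) fun z hz =>
      ENNReal.ofReal_le_ofReal (hgb z (hsub (hs' hz)))
  have hpt : ∀ z ∈ Ioo 0 y,
      b z * ENNReal.ofReal (z ^ 2) ≤ ENNReal.ofReal (C / Real.log (1 / y) ^ p) := by
    intro z hz
    have hz1 : z < 1 := hz.2.trans (hy.2.trans_lt hz₀)
    have hLz := log_one_div_rpow_pos p hz.1 hz1
    have hmono :=
      monotoneOn_div_log_one_div_rpow hC hp ⟨hz.1, hz1⟩ ⟨hy.1, hy.2.trans_lt hz₀⟩ hz.2.le
    calc b z * ENNReal.ofReal (z ^ 2) = ENNReal.ofReal (C / Real.log (1 / z) ^ p) := by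
          have hz0 : z ≠ 0 := hz.1.ne'
          rw [← ENNReal.ofReal_mul (by positivity)]
          field_simp
      _ ≤ ENNReal.ofReal (C / Real.log (1 / y) ^ p) := ENNReal.ofReal_le_ofReal hmono
  calc ∫⁻ z in Ioo 0 y, ENNReal.ofReal (z ^ 2) ∂m
      ≤ ∫⁻ z in Ioo 0 y, b z * ENNReal.ofReal (z ^ 2) :=
        setLIntegral_le_setLIntegral_mul_of_le_withDensity measurableSet_Ioo (by fun_prop)
          (by fun_prop) hmb
    _ ≤ ∫⁻ _ in Ioo 0 y, ENNReal.ofReal (C / Real.log (1 / y) ^ p) :=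
        setLIntegral_mono' measurableSet_Ioo hpt
    _ = ENNReal.ofReal (y * (C / Real.log (1 / y) ^ p)) := by
      rw [setLIntegral_const, Real.volume_Ioo, sub_zero, mul_comm, ENNReal.ofReal_mul hy.1.le]

theorem iSup_Ioc_ofReal_one_div_mul_le {F : ℝ → ℝ≥0∞} {φ : ℝ → ℝ} {x : ℝ}
    (hF : ∀ y ∈ Ioc 0 x, F y ≤ ENNReal.ofReal (y * φ y)) (hφ : MonotoneOn φ (Ioc 0 x)) :
    ⨆ y ∈ Ioc 0 x, ENNReal.ofReal (1 / y) * F y ≤ ENNReal.ofReal (φ x) := by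
  refine iSup₂_le fun y hy => ?_
  have hy0 : y ≠ 0 := hy.1.ne'
  calc ENNReal.ofReal (1 / y) * F y ≤ ENNReal.ofReal (1 / y) * ENNReal.ofReal (y * φ y) := by
        gcongr
        exact hF y hy
    _ = ENNReal.ofReal (φ y) := by
        rw [← ENNReal.ofReal_mul (one_div_nonneg.2 hy.1.le)]
        field_simp
    _ ≤ ENNReal.ofReal (φ x) := ENNReal.ofReal_le_ofReal (hφ hy ⟨hy.1.trans_le hy.2, le_rfl⟩ hy.2)

theorem iSup_Ioc_ofReal_one_div_mul_le_add {F : ℝ → ℝ≥0∞} (hF : Monotone F) {a b x : ℝ}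
    (ha : 0 < a) (hxb : x ≤ b) :
    ⨆ y ∈ Ioc 0 x, ENNReal.ofReal (1 / y) * F y ≤
      (⨆ y ∈ Ioc 0 a, ENNReal.ofReal (1 / y) * F y) + ENNReal.ofReal (1 / a) * F b := by
  refine iSup₂_le fun y hy => ?_
  rcases le_or_gt y a with hya | hay
  · exact le_add_right (le_iSup₂ (f := fun y _ => ENNReal.ofReal (1 / y) * F y) y ⟨hy.1, hya⟩)
  · refine le_add_left ?_
    gcongr
    exact hF (hy.2.trans hxb)

theorem setLIntegral_Ioo_zero_one_sq_lt_top {m : Measure ℝ} {a : ℝ} (ha : 0 < a)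
    (hloc : ∀ x : ℝ, 0 < x → ∃ s ∈ 𝓝 x, m s < ⊤)
    (h : ∫⁻ z in Ioo 0 a, ENNReal.ofReal (z ^ 2) ∂m < ⊤) :
    ∫⁻ z in Ioo 0 1, ENNReal.ofReal (z ^ 2) ∂m < ⊤ := by
  have hcpt : m (Icc a 1) < ⊤ := isCompact_Icc.measure_lt_top_of_nhdsWithin fun x hx =>
    let ⟨s, hs, hfin⟩ := hloc x (ha.trans_le hx.1)
    ⟨s, nhdsWithin_le_nhds hs, hfin⟩
  have hIcc : ∫⁻ z in Icc a 1, ENNReal.ofReal (z ^ 2) ∂m < ⊤ :=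
    setLIntegral_lt_top_of_le_nnreal hcpt.ne
      ⟨1, fun z hz => (ENNReal.ofReal_le_one.2 (pow_le_one₀ (ha.le.trans hz.1) hz.2)).trans_eq
        ENNReal.coe_one.symm⟩
  calc ∫⁻ z in Ioo 0 1, ENNReal.ofReal (z ^ 2) ∂m
      ≤ ∫⁻ z in Ioo 0 a ∪ Icc a 1, ENNReal.ofReal (z ^ 2) ∂m :=
        lintegral_mono_set fun z hz => (lt_or_ge z a).imp (fun h => ⟨hz.1, h⟩) fun h => ⟨h, hz.2.le⟩
    _ ≤ _ := lintegral_union_le _ _ _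
    _ < ⊤ := ENNReal.add_lt_top.2 ⟨h, hIcc⟩

theorem stmt4 (ε C z₀ : ℝ) (hε : 0 < ε) (hC : 0 < C) (hz₀ : z₀ ∈ Ioo (0 : ℝ) 1)
    (m : Measure ℝ) (hloc : ∀ x : ℝ, 0 < x → ∃ s ∈ nhds x, m s < ⊤)
    (g : ℝ → ℝ)
    (hdens : ∀ s : Set ℝ, MeasurableSet s → s ⊆ Ioo 0 z₀ →
      m s = ∫⁻ z in s, ENNReal.ofReal (g z))
    (hgb : ∀ z ∈ Ioo (0 : ℝ) z₀, g z ≤ C / (z ^ 2 * Real.log (1 / z) ^ (1 + ε))) :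
    (∫⁻ x in Ioo (0 : ℝ) 1,
      ENNReal.ofReal (1 / x) *
        (⨆ y ∈ Ioc (0 : ℝ) x,
          ENNReal.ofReal (1 / y) * (∫⁻ z in Ioo (0 : ℝ) y, ENNReal.ofReal (z ^ 2) ∂m))) < ⊤ := by
  obtain ⟨hz0, hz1⟩ := hz₀
  set φ : ℝ → ℝ := fun z => C / Real.log (1 / z) ^ (1 + ε)
  set F : ℝ → ℝ≥0∞ := fun y => ∫⁻ z in Ioo (0 : ℝ) y, ENNReal.ofReal (z ^ 2) ∂m
  have hφ : MonotoneOn φ (Ioo 0 1) := monotoneOn_div_log_one_div_rpow hC.le (by linarith)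
  have hF : ∀ y ∈ Ioc 0 z₀, F y ≤ ENNReal.ofReal (y * φ y) :=
    fun y hy => setLIntegral_Ioo_sq_le hC.le (by linarith) hz1 hdens hgb hy
  have hsmall : ∀ x ∈ Ioc 0 z₀,
      ⨆ y ∈ Ioc 0 x, ENNReal.ofReal (1 / y) * F y ≤ ENNReal.ofReal (φ x) :=
    fun x hx => iSup_Ioc_ofReal_one_div_mul_le (fun y hy => hF y ⟨hy.1, hy.2.trans hx.2⟩)
      (hφ.mono (Ioc_subset_Ioo_right (hx.2.trans_lt hz1)))
  have hF1 : F 1 < ⊤ :=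
    setLIntegral_Ioo_zero_one_sq_lt_top hz0 hloc ((hF z₀ ⟨hz0, le_rfl⟩).trans_lt ofReal_lt_top)
  have hFmono : Monotone F := fun _ _ h => lintegral_mono_set (Ioo_subset_Ioo_right h)
  rw [← Ioo_union_Ico_eq_Ioo hz0 hz1.le]
  refine (lintegral_union_le _ _ _).trans_lt (ENNReal.add_lt_top.2 ⟨?_, ?_⟩)
  · exact setLIntegral_Ioo_ofReal_one_div_mul_lt_top (by linarith) hz0 hz1
      fun x hx => hsmall x ⟨hx.1, hx.2.le⟩
  · set K := ENNReal.ofReal (1 / z₀) * (ENNReal.ofReal (φ z₀) + ENNReal.ofReal (1 / z₀) * F 1)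
    have hK : ∀ x ∈ Ico z₀ 1,
        ENNReal.ofReal (1 / x) * (⨆ y ∈ Ioc 0 x, ENNReal.ofReal (1 / y) * F y) ≤ K :=
      fun x hx => mul_le_mul' (ENNReal.ofReal_le_ofReal (one_div_le_one_div_of_le hz0 hx.1))
        ((iSup_Ioc_ofReal_one_div_mul_le_add hFmono hz0 hx.2.le).trans
          (add_le_add (hsmall z₀ ⟨hz0, le_rfl⟩) le_rfl))
    have hKfin : K ≠ ⊤ := by finiteness
    exact setLIntegral_lt_top_of_le_nnreal (by simp)
      ⟨K.toNNReal, fun x hx => (hK x hx).trans_eq (coe_toNNReal hKfin).symm⟩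
end

section
/- Let m be a locally finite nonnegative Borel measure on (0,∞), let f(x) = 1/x, and let f_*m be the pushforward of m by f. Then for all 0 < a < z < b < ∞ and every bounded Borel measurable function g : (0,∞) → ℝ, ∫_{(a,b)} ((min(z,y) − a)(b − max(z,y))/(b − a)) · (g(y)/y²) d(f_*m)(y) = z · ∫_{(1/b,1/a)} ((1/a − max(1/z, x)) · (min(x, 1/z) − 1/b)/(1/a − 1/b)) · x · g(1/x) dm(x). -/
/-!
Inversion `x ↦ x⁻¹` is a measurable involution of all of `ℝ` (with `0⁻¹ = 0`), so integrating
against the pushforward of `m` is integrating against `m` after substituting `y = x⁻¹`.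
The Green kernel of natural scale transforms under inversion as `G_{a,b}(z, y) = z y G_{1/b,1/a}(1/z, 1/y)`, and `z y · y⁻² = z x`.
-/

open MeasureTheory Set

theorem Set.inv_Ioo₀ {α : Type*} [Field α] [LinearOrder α] [IsStrictOrderedRing α] {a b : α}
    (ha : 0 < a) (hb : 0 < b) : (Ioo a b)⁻¹ = Ioo b⁻¹ a⁻¹ := by
  ext x
  simp only [mem_inv, mem_Ioo]
  constructor
  · rintro ⟨hax, hxb⟩
    have hx : 0 < x := inv_pos.mp (ha.trans hax)
    exact ⟨(inv_lt_comm₀ hx hb).mp hxb, (lt_inv_comm₀ ha hx).mp hax⟩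
  · rintro ⟨hbx, hxa⟩
    have hx : 0 < x := (inv_pos.mpr hb).trans hbx
    exact ⟨(lt_inv_comm₀ ha hx).mpr hxa, (inv_lt_comm₀ hx hb).mpr hbx⟩

theorem MeasureTheory.Measure.setIntegral_inv {G E : Type*} [MeasurableSpace G] [InvolutiveInv G]
    [MeasurableInv G] [NormedAddCommGroup E] [NormedSpace ℝ E] (μ : Measure G) (f : G → E)
    (s : Set G) : ∫ y in s, f y ∂μ.inv = ∫ x in s⁻¹, f x⁻¹ ∂μ :=
  setIntegral_map_equiv (MeasurableEquiv.inv G) f s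

/-- The Green kernel `G_{a,b}(z, y)` on `(a, b)` of a diffusion on natural scale. -/
noncomputable def greenKernel (a b z y : ℝ) : ℝ := (min z y - a) * (b - max z y) / (b - a)

theorem greenKernel_comm (a b z y : ℝ) : greenKernel a b z y = greenKernel a b y z := by
  simp only [greenKernel, min_comm, max_comm]

theorem greenKernel_inv {a b z y : ℝ} (ha : a ≠ 0) (hb : b ≠ 0) (hz : 0 < z) (hy : 0 < y) :
    greenKernel a b z y = z * y * greenKernel b⁻¹ a⁻¹ z⁻¹ y⁻¹ := by
  wlog hzy : z ≤ y generalizing z y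
  · rw [greenKernel_comm, this hy hz (le_of_not_ge hzy), greenKernel_comm _ _ y⁻¹, mul_comm y]
  have hzy' : y⁻¹ ≤ z⁻¹ := inv_anti₀ hz hzy
  simp only [greenKernel, min_eq_left hzy, max_eq_right hzy, min_eq_right hzy', max_eq_left hzy']
  field_simp

theorem stmt7_general (m : Measure ℝ)
    (a b z : ℝ) (ha : 0 < a) (haz : a < z) (hzb : z < b)
    (g : ℝ → ℝ) :
    (∫ y in Ioo a b,
        (min z y - a) * (b - max z y) / (b - a) * (g y / y ^ 2)
          ∂(Measure.map (fun x => 1 / x) m)) =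
      z * ∫ x in Ioo (1 / b) (1 / a),
        (1 / a - max (1 / z) x) * (min x (1 / z) - 1 / b) / (1 / a - 1 / b) *
          (x * g (1 / x)) ∂m := by
  have hz : 0 < z := ha.trans haz
  have hb : 0 < b := hz.trans hzb
  have hmap : Measure.map (fun x : ℝ => 1 / x) m = m.inv := by simp only [one_div]; rfl
  rw [hmap, Measure.setIntegral_inv, Set.inv_Ioo₀ ha hb, ← integral_const_mul]
  simp only [one_div]
  refine setIntegral_congr_fun measurableSet_Ioo fun x hx => ?_
  have hx : 0 < x := (inv_pos.mpr hb).trans hx.1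
  have hG := greenKernel_inv ha.ne' hb.ne' hz (inv_pos.mpr hx)
  simp only [greenKernel, inv_inv] at hG
  rw [hG, min_comm x]
  field_simp

theorem stmt7 (m : Measure ℝ) (hloc : ∀ x : ℝ, 0 < x → ∃ s ∈ nhds x, m s < ⊤)
    (a b z : ℝ) (ha : 0 < a) (haz : a < z) (hzb : z < b)
    (g : ℝ → ℝ) (hgm : Measurable g) (K : ℝ) (hgb : ∀ y : ℝ, |g y| ≤ K) :
    (∫ y in Ioo a b,
        (min z y - a) * (b - max z y) / (b - a) * (g y / y ^ 2)
          ∂(Measure.map (fun x => 1 / x) m)) =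
      z * ∫ x in Ioo (1 / b) (1 / a),
        (1 / a - max (1 / z) x) * (min x (1 / z) - 1 / b) / (1 / a - 1 / b) *
          (x * g (1 / x)) ∂m :=
  stmt7_general m a b z ha haz hzb g
end

section
/- Let γ ∈ (0,π], a ≥ 0, b ≥ 0, let m be the measure on (−1,1) equal to Lebesgue measure plus a unit Dirac mass at 0, and define g : (−1,1) → ℝ by g(0) = a and g(x) = b · sin( γ · min(1+x, 1−x) ) for x ≠ 0. Suppose that ∫_{(−1,1)} g dm = 1 and that for every x ∈ (−1,1), g(x) = (γ²/2) · ∫_{(−1,1)} (min(x,y) + 1)(1 − max(x,y)) · g(y) dm(y). Then cos γ = (γ/2) sin γ, b = γ/2, and a = (γ sin γ)/2. -/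
/-!
Up to a factor 2, `(min x y + 1) * (1 - max x y)` is the Dirichlet Green kernel of `-d²/dx²` on
`(-1, 1)`. Integrating it against the tent sine `sin (γ (1 - |y|))` therefore gives
`2 sin (γ (1 - x)) / γ²` plus the affine correction `-2 cos γ (1 - x) / γ` that makes the result
even. In the fixed-point equation at `x ∈ (0, 1)` the sine terms cancel, leaving
`(1 - x) (γ² a / 2 - b γ cos γ) = 0`, i.e. `a γ = 2 b cos γ`. The equation at the atom `x = 0`
then gives `a = b sin γ`, and the normalisation gives `b = γ / 2`.
-/

open MeasureTheory Set Real intervalIntegral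

theorem integral_restrict_Ioo_add_dirac {f G : ℝ → ℝ} {u v c : ℝ} (huv : u ≤ v)
    (hG : IntervalIntegrable G volume u v) (hfG : ∀ x ∈ Ioo u v, x ≠ c → f x = G x) :
    ∫ x, f x ∂(volume.restrict (Ioo u v) + Measure.dirac c) = (∫ x in u..v, G x) + f c := by
  have hae : f =ᵐ[volume.restrict (Ioo u v)] G := by
    filter_upwards [ae_restrict_mem measurableSet_Ioo, Measure.ae_ne _ c] with x hx hxc
    exact hfG x hx hxc
  have hf : Integrable f (volume.restrict (Ioo u v)) :=
    ((intervalIntegrable_iff_integrableOn_Ioo_of_le huv).1 hG).congr hae.symm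
  rw [integral_add_measure hf (integrable_dirac enorm_lt_top), integral_dirac,
    integral_congr_ae hae, integral_of_le huv, integral_Ioc_eq_integral_Ioo]

theorem hasDerivAt_affine_mul_sin {p q k d : ℝ} (hk : k ≠ 0) (y : ℝ) :
    HasDerivAt (fun t ↦ -(p + q * t) * cos (k * t + d) / k + q * sin (k * t + d) / k ^ 2)
      ((p + q * y) * sin (k * y + d)) y := by
  have hlin : HasDerivAt (fun t ↦ k * t + d) k y := by
    simpa using ((hasDerivAt_id y).const_mul k).add_const d
  have haff : HasDerivAt (fun t ↦ -(p + q * t)) (-q) y := by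
    simpa using (((hasDerivAt_id y).const_mul q).const_add p).fun_neg
  refine (((haff.mul hlin.cos).div_const k).add
    ((hlin.sin.const_mul q).div_const (k ^ 2))).congr_deriv ?_
  field_simp
  ring

theorem integral_affine_mul_sin {p q k d : ℝ} (hk : k ≠ 0) (u v : ℝ) :
    ∫ y in u..v, (p + q * y) * sin (k * y + d) =
      (-(p + q * v) * cos (k * v + d) / k + q * sin (k * v + d) / k ^ 2) -
        (-(p + q * u) * cos (k * u + d) / k + q * sin (k * u + d) / k ^ 2) :=
  integral_eq_sub_of_hasDerivAt (fun y _ ↦ hasDerivAt_affine_mul_sin hk y)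
    ((by fun_prop : Continuous fun y ↦ (p + q * y) * sin (k * y + d)).intervalIntegrable _ _)

theorem integral_sin_tent {γ : ℝ} (hγ : γ ≠ 0) :
    ∫ y in (-1 : ℝ)..1, sin (γ * min (1 + y) (1 - y)) = 2 * (1 - cos γ) / γ := by
  have hc : Continuous fun y : ℝ ↦ sin (γ * min (1 + y) (1 - y)) := by fun_prop
  rw [← integral_add_adjacent_intervals (b := 0) (hc.intervalIntegrable _ _)
    (hc.intervalIntegrable _ _)]
  have hleft : EqOn (fun y : ℝ ↦ sin (γ * min (1 + y) (1 - y)))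
      (fun y ↦ (1 + 0 * y) * sin (γ * y + γ)) (uIcc (-1) 0) := by
    intro y hy
    rw [uIcc_of_le (by norm_num)] at hy
    simp only [min_eq_left (by linarith [hy.2] : 1 + y ≤ 1 - y)]
    ring_nf
  have hright : EqOn (fun y : ℝ ↦ sin (γ * min (1 + y) (1 - y)))
      (fun y ↦ (1 + 0 * y) * sin (-γ * y + γ)) (uIcc 0 1) := by
    intro y hy
    rw [uIcc_of_le (by norm_num)] at hy
    simp only [min_eq_right (by linarith [hy.1] : 1 - y ≤ 1 + y)]
    ring_nf
  rw [integral_congr hleft, integral_congr hright, integral_affine_mul_sin hγ,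
    integral_affine_mul_sin (neg_ne_zero.2 hγ)]
  simp only [mul_zero, zero_add, mul_neg, mul_one, neg_add_cancel, cos_zero, sin_zero]
  field_simp
  ring

theorem integral_green_mul_sin_tent {γ x : ℝ} (hγ : γ ≠ 0) (hx : x ∈ Icc (0 : ℝ) 1) :
    ∫ y in (-1 : ℝ)..1, (min x y + 1) * (1 - max x y) * sin (γ * min (1 + y) (1 - y)) =
      2 * sin (γ * (1 - x)) / γ ^ 2 - 2 * cos γ * (1 - x) / γ := by
  have hc : Continuous fun y : ℝ ↦
      (min x y + 1) * (1 - max x y) * sin (γ * min (1 + y) (1 - y)) := by fun_prop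
  rw [← integral_add_adjacent_intervals (b := 0) (hc.intervalIntegrable _ _)
    (hc.intervalIntegrable _ _), ← integral_add_adjacent_intervals (b := x)
    (hc.intervalIntegrable 0 x) (hc.intervalIntegrable x 1)]
  have hleft : EqOn (fun y : ℝ ↦ (min x y + 1) * (1 - max x y) * sin (γ * min (1 + y) (1 - y)))
      (fun y ↦ ((1 - x) + (1 - x) * y) * sin (γ * y + γ)) (uIcc (-1) 0) := by
    intro y hy
    rw [uIcc_of_le (by norm_num)] at hy
    simp only [min_eq_left (by linarith [hy.2] : 1 + y ≤ 1 - y),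
      min_eq_right (by linarith [hy.2, hx.1] : y ≤ x), max_eq_left (by linarith [hy.2, hx.1] : y ≤ x)]
    ring_nf
  have hmid : EqOn (fun y : ℝ ↦ (min x y + 1) * (1 - max x y) * sin (γ * min (1 + y) (1 - y)))
      (fun y ↦ ((1 - x) + (1 - x) * y) * sin (-γ * y + γ)) (uIcc 0 x) := by
    intro y hy
    rw [uIcc_of_le hx.1] at hy
    simp only [min_eq_right (by linarith [hy.1] : 1 - y ≤ 1 + y),
      min_eq_right hy.2, max_eq_left hy.2]
    ring_nf
  have hright : EqOn (fun y : ℝ ↦ (min x y + 1) * (1 - max x y) * sin (γ * min (1 + y) (1 - y)))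
      (fun y ↦ ((1 + x) + -(1 + x) * y) * sin (-γ * y + γ)) (uIcc x 1) := by
    intro y hy
    rw [uIcc_of_le hx.2] at hy
    simp only [min_eq_right (by linarith [hy.1, hx.1] : 1 - y ≤ 1 + y),
      min_eq_left hy.1, max_eq_right hy.1]
    ring_nf
  rw [integral_congr hleft, integral_congr hmid, integral_congr hright,
    integral_affine_mul_sin hγ, integral_affine_mul_sin (neg_ne_zero.2 hγ),
    integral_affine_mul_sin (neg_ne_zero.2 hγ)]
  simp only [mul_zero, zero_add, mul_neg, mul_one, neg_add_cancel, cos_zero, sin_zero]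
  rw [show -γ * x + γ = γ * (1 - x) by ring]
  field_simp
  ring

section StickyProfile

variable {γ a b : ℝ} {g : ℝ → ℝ}

theorem integral_sticky_profile (hγ : γ ≠ 0) (hg0 : g 0 = a)
    (hgx : ∀ x ∈ Ioo (-1 : ℝ) 1, x ≠ 0 → g x = b * sin (γ * min (1 + x) (1 - x))) :
    ∫ x, g x ∂(volume.restrict (Ioo (-1 : ℝ) 1) + Measure.dirac 0) =
      2 * b * (1 - cos γ) / γ + a := by
  rw [integral_restrict_Ioo_add_dirac (by norm_num)
    ((by fun_prop : Continuous fun y : ℝ ↦ b * sin (γ * min (1 + y) (1 - y))).intervalIntegrable _ _)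
    hgx, intervalIntegral.integral_const_mul, integral_sin_tent hγ, hg0]
  ring

theorem integral_green_mul_sticky_profile (hγ : γ ≠ 0) (hg0 : g 0 = a)
    (hgx : ∀ x ∈ Ioo (-1 : ℝ) 1, x ≠ 0 → g x = b * sin (γ * min (1 + x) (1 - x)))
    {x : ℝ} (hx : x ∈ Icc (0 : ℝ) 1) :
    ∫ y, (min x y + 1) * (1 - max x y) * g y
        ∂(volume.restrict (Ioo (-1 : ℝ) 1) + Measure.dirac 0) =
      b * (2 * sin (γ * (1 - x)) / γ ^ 2 - 2 * cos γ * (1 - x) / γ) + (1 - x) * a := by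
  have hc : Continuous fun y : ℝ ↦
      b * ((min x y + 1) * (1 - max x y) * sin (γ * min (1 + y) (1 - y))) := by fun_prop
  rw [integral_restrict_Ioo_add_dirac (by norm_num) (hc.intervalIntegrable _ _)
    (fun y hy hy0 ↦ by rw [hgx y hy hy0]; ring), intervalIntegral.integral_const_mul,
    integral_green_mul_sin_tent hγ hx, hg0, min_eq_right hx.1, max_eq_left hx.1]
  ring

end StickyProfile

theorem stmt11_general (γ a b : ℝ) (hγ : γ ∈ Ioc 0 Real.pi)
    (g : ℝ → ℝ) (hg0 : g 0 = a)
    (hgx : ∀ x ∈ Ioo (-1 : ℝ) 1, x ≠ 0 → g x = b * Real.sin (γ * min (1 + x) (1 - x)))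
    (hnorm : (∫ x, g x ∂(volume.restrict (Ioo (-1 : ℝ) 1) + Measure.dirac 0)) = 1)
    (hfix : ∀ x ∈ Ioo (-1 : ℝ) 1,
      g x = γ ^ 2 / 2 *
        ∫ y, (min x y + 1) * (1 - max x y) * g y
          ∂(volume.restrict (Ioo (-1 : ℝ) 1) + Measure.dirac 0)) :
    Real.cos γ = γ / 2 * Real.sin γ ∧ b = γ / 2 ∧ a = γ * Real.sin γ / 2 := by
  have hγ0 : γ ≠ 0 := hγ.1.ne'
  rw [integral_sticky_profile hγ0 hg0 hgx] at hnorm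
  have hfix0 := hfix 0 (by norm_num)
  rw [hg0, integral_green_mul_sticky_profile hγ0 hg0 hgx (by norm_num)] at hfix0
  have hfixHalf := hfix (1 / 2) (by norm_num)
  rw [hgx _ (by norm_num) (by norm_num),
    integral_green_mul_sticky_profile hγ0 hg0 hgx (by norm_num)] at hfixHalf
  norm_num at hfix0 hfixHalf
  field_simp at hnorm hfix0 hfixHalf
  have hatom : a * γ = 2 * b * cos γ := by
    refine mul_left_cancel₀ hγ0 ?_
    linear_combination -hfixHalf
  have ha : a = b * sin γ := by linear_combination hfix0 / 2 + γ * hatom / 2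
  have hb : b = γ / 2 := by linear_combination hnorm / 2 - hatom / 2
  have hcos : cos γ = a := by
    refine mul_left_cancel₀ hγ0 ?_
    linear_combination -hatom - 2 * cos γ * hb
  refine ⟨?_, hb, ?_⟩
  · linear_combination hcos + ha + sin γ * hb
  · linear_combination ha + sin γ * hb

theorem stmt11 (γ a b : ℝ) (hγ : γ ∈ Ioc 0 Real.pi) (ha : 0 ≤ a) (hb : 0 ≤ b)
    (g : ℝ → ℝ) (hg0 : g 0 = a)
    (hgx : ∀ x ∈ Ioo (-1 : ℝ) 1, x ≠ 0 → g x = b * Real.sin (γ * min (1 + x) (1 - x)))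
    (hnorm : (∫ x, g x ∂(volume.restrict (Ioo (-1 : ℝ) 1) + Measure.dirac 0)) = 1)
    (hfix : ∀ x ∈ Ioo (-1 : ℝ) 1,
      g x = γ ^ 2 / 2 *
        ∫ y, (min x y + 1) * (1 - max x y) * g y
          ∂(volume.restrict (Ioo (-1 : ℝ) 1) + Measure.dirac 0)) :
    Real.cos γ = γ / 2 * Real.sin γ ∧ b = γ / 2 ∧ a = γ * Real.sin γ / 2 :=
  stmt11_general γ a b hγ g hg0 hgx hnorm hfix
end
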